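/- Let Φ be a Borel measure on Q_p \ {0} that is finite outside every neighbourhood of 0, let F be a probability distribution on Q_p, k(n) an increasing sequence of naturals, B_n ∈ Q_p with |B_n|_p → ∞, and define measures Φ_n(dy) = k(n) F(d(B_n y)) (pushforward of k(n)·F under multiplication by B_n^{-1}). If Φ_n → Φ weakly on each set {x : |x|_p > p^i}, i ∈ ℤ, then for every fixed t ∈ Q_p, ∫_{Q_p\{0}} (χ(ty) − 1) Φ_n(dy) → ∫_{Q_p\{0}} (χ(ty) − 1) Φ(dy), and hence the characteristic functions f_n(t) = (1 + (1/k(n)) ∫ (χ(ty) − 1) Φ_n(dy))^{k(n)} of the normalized sums S_n = B_n^{-1}(X₁ + ⋯ + X_{k(n)}) (X_j i.i.d. with distribution F) converge pointwise to exp(∫_{Q_p\{0}} (χ(ty) − 1) Φ(dy)). -/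

import Mathlib

open MeasureTheory Metric Filter Topology
open scoped ENNReal NNReal

noncomputable section

variable {p : ℕ} [Fact p.Prime]

instance : MeasurableSpace ℚ_[p] := borel _
instance : BorelSpace ℚ_[p] := ⟨rfl⟩

/-- The `p`-adic fractional part of `x : ℚ_[p]`: a rational of the form
`k / p^n`, `0 ≤ k < p^n`, with `‖x - {x}_p‖ ≤ 1`. -/
def padicFract (x : ℚ_[p]) : ℚ :=
  let n : ℕ := (-x.valuation).toNat
  (PadicInt.appr ⟨(p : ℚ_[p]) ^ n * x, by
      rcases eq_or_ne x 0 with h | h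
      · simp [h]
      · rw [norm_mul, Padic.norm_p_pow, Padic.norm_eq_zpow_neg_valuation h]
        rw [← Real.rpow_intCast, ← Real.rpow_intCast, ← Real.rpow_add
          (by exact_mod_cast (Fact.out : p.Prime).pos)]
        refine Real.rpow_le_one_of_one_le_of_nonpos
          (by exact_mod_cast (Fact.out : p.Prime).one_lt.le) ?_
        have h2 := Int.self_le_toNat (-x.valuation)
        push_cast
        exact_mod_cast (by omega :
          -(((-x.valuation).toNat : ℤ) : ℤ) + -x.valuation ≤ 0)⟩ n : ℚ)
    / (p : ℚ) ^ n

/-- The canonical additive character `χ(x) = exp(2πi {x}_p)` of `ℚ_[p]`. -/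
def padicChar (x : ℚ_[p]) : ℂ :=
  Complex.exp (2 * Real.pi * Complex.I * (padicFract x : ℂ))

/-- The characteristic function of a measure on `ℚ_[p]`. -/
def padicCharFun (μ : Measure ℚ_[p]) (t : ℚ_[p]) : ℂ :=
  ∫ x, padicChar (t * x) ∂μ

/-- The Haar measure on `ℚ_[p]` normalized so that the unit ball has measure 1. -/
def padicHaar : Measure ℚ_[p] :=
  Measure.addHaarMeasure
    ⟨⟨closedBall 0 1, isCompact_closedBall 0 1⟩, by
      refine ⟨0, ?_⟩
      rw [(IsUltrametricDist.isOpen_closedBall (0 : ℚ_[p]) one_ne_zero).interior_eq]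
      exact mem_closedBall_self zero_le_one⟩

/-! `χ x = χ y` whenever `‖x - y‖ ≤ 1`: then `{x}_p - {y}_p` is a rational with `p`-power
denominator and `p`-adic norm at most `1`, i.e. an integer. Hence `y ↦ χ(t y) - 1` is a bounded
continuous function vanishing on the ball `‖y‖ ≤ p ^ v(t)`, and its integrals against `Φₙ` and
`Φ` are integrals over `{‖y‖ > p ^ v(t)}`, where weak convergence applies; this set has finite
`Φ`-measure since its complement is a neighbourhood of `0`. The second limit is then
`(1 + zₙ / kₙ) ^ kₙ → exp z`. -/

lemma norm_sub_padicFract_le_one (x : ℚ_[p]) : ‖x - padicFract x‖ ≤ 1 := by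
  unfold padicFract
  dsimp only
  generalize_proofs hz
  set n := (-x.valuation).toNat
  set z : ℤ_[p] := ⟨_, hz⟩
  have hzx : (z : ℚ_[p]) = p ^ n * x := rfl
  have hpn : (p : ℚ_[p]) ^ n ≠ 0 :=
    pow_ne_zero n (Nat.cast_ne_zero.mpr (Fact.out : p.Prime).ne_zero)
  have happr : ‖z - PadicInt.appr z n‖ ≤ (p : ℝ) ^ (-(n : ℤ)) :=
    (PadicInt.norm_le_pow_iff_mem_span_pow _ n).mpr (PadicInt.appr_spec n z)
  have hdiff : x - (((PadicInt.appr z n : ℚ) / (p : ℚ) ^ n : ℚ) : ℚ_[p])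
      = ((z - PadicInt.appr z n : ℤ_[p]) : ℚ_[p]) / (p : ℚ_[p]) ^ n := by
    push_cast
    rw [hzx]
    field_simp
  rw [hdiff, norm_div, PadicInt.padic_norm_e_of_padicInt, norm_pow, Padic.norm_p, inv_pow,
    div_inv_eq_mul, ← zpow_natCast]
  calc ‖z - PadicInt.appr z n‖ * (p : ℝ) ^ (n : ℤ)
      ≤ (p : ℝ) ^ (-(n : ℤ)) * (p : ℝ) ^ (n : ℤ) := by gcongr
    _ = 1 := by
      rw [← zpow_add₀ (Nat.cast_ne_zero.mpr (Fact.out : p.Prime).ne_zero), neg_add_cancel,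
        zpow_zero]

lemma exists_int_eq_div_pow_of_norm_le_one {a : ℤ} {N : ℕ}
    (h : ‖(((a / (p : ℚ) ^ N : ℚ)) : ℚ_[p])‖ ≤ 1) : ∃ e : ℤ, a / (p : ℚ) ^ N = e := by
  have hp_padic : (p : ℚ_[p]) ≠ 0 := Nat.cast_ne_zero.mpr (Fact.out : p.Prime).ne_zero
  have hnorm : ‖(a : ℚ_[p])‖ ≤ (p : ℝ) ^ (-(N : ℤ)) := by
    have ha : (a : ℚ_[p]) = (((a / (p : ℚ) ^ N : ℚ)) : ℚ_[p]) * (p : ℚ_[p]) ^ N := by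
      push_cast
      field_simp
    rw [ha, norm_mul, Padic.norm_p_pow]
    exact mul_le_of_le_one_left (by positivity) h
  obtain ⟨e, rfl⟩ := (Padic.norm_int_le_pow_iff_dvd a N).mp hnorm
  have hp : (p : ℚ) ≠ 0 := Nat.cast_ne_zero.mpr (Fact.out : p.Prime).ne_zero
  exact ⟨e, by push_cast; field_simp⟩

lemma padicChar_eq_of_norm_sub_le_one {x y : ℚ_[p]} (h : ‖x - y‖ ≤ 1) :
    padicChar x = padicChar y := by
  obtain ⟨a, n, ha⟩ : ∃ a n : ℕ, padicFract x = a / (p : ℚ) ^ n := ⟨_, _, rfl⟩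
  obtain ⟨b, m, hb⟩ : ∃ b m : ℕ, padicFract y = b / (p : ℚ) ^ m := ⟨_, _, rfl⟩
  have hp : (p : ℚ) ≠ 0 := Nat.cast_ne_zero.mpr (Fact.out : p.Prime).ne_zero
  have hdiff :
      padicFract x - padicFract y = ((a * p ^ m - b * p ^ n : ℤ) : ℚ) / (p : ℚ) ^ (n + m) := by
    rw [ha, hb]
    push_cast
    field_simp
    ring
  have hnorm : ‖((padicFract x - padicFract y : ℚ) : ℚ_[p])‖ ≤ 1 := by
    have hsplit : ((padicFract x - padicFract y : ℚ) : ℚ_[p])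
        = -(x - padicFract x) + (x - y) + (y - padicFract y) := by
      push_cast
      ring
    rw [hsplit]
    refine (Padic.nonarchimedean _ _).trans (max_le ((Padic.nonarchimedean _ _).trans
      (max_le ?_ h)) (norm_sub_padicFract_le_one y))
    rw [norm_neg]
    exact norm_sub_padicFract_le_one x
  rw [hdiff] at hnorm
  obtain ⟨e, he⟩ := exists_int_eq_div_pow_of_norm_le_one hnorm
  rw [← hdiff, sub_eq_iff_eq_add'] at he
  have hperiod : Complex.exp (2 * Real.pi * Complex.I * e) = 1 :=
    Complex.exp_eq_one_iff.mpr ⟨e, by ring⟩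
  rw [padicChar, padicChar, he, Rat.cast_add, Rat.cast_intCast, mul_add, Complex.exp_add,
    hperiod, mul_one]

lemma padicChar_zero : padicChar (0 : ℚ_[p]) = 1 := by
  simp [padicChar, padicFract, PadicInt.appr]

lemma padicChar_eq_one_of_norm_le_one {x : ℚ_[p]} (h : ‖x‖ ≤ 1) : padicChar x = 1 := by
  rw [padicChar_eq_of_norm_sub_le_one (y := 0) (by simpa using h), padicChar_zero]

lemma continuous_padicChar : Continuous (padicChar (p := p)) :=
  continuous_iff_continuousAt.mpr fun x ↦ ContinuousAt.congr continuousAt_const <| by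
    filter_upwards [closedBall_mem_nhds x one_pos] with y hy
    exact padicChar_eq_of_norm_sub_le_one (by rwa [norm_sub_rev, ← dist_eq_norm])

lemma norm_padicChar (x : ℚ_[p]) : ‖padicChar x‖ = 1 := by
  rw [padicChar, Complex.norm_exp]
  simp

lemma padicChar_mul_eq_one_of_norm_le {t y : ℚ_[p]} (hy : ‖y‖ ≤ (p : ℝ) ^ t.valuation) :
    padicChar (t * y) = 1 := by
  refine padicChar_eq_one_of_norm_le_one ?_
  rcases eq_or_ne t 0 with rfl | ht
  · simp
  have hp : (p : ℝ) ≠ 0 := Nat.cast_ne_zero.mpr (Fact.out : p.Prime).ne_zero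
  calc ‖t * y‖ ≤ (p : ℝ) ^ (-t.valuation) * (p : ℝ) ^ t.valuation := by
        rw [norm_mul, Padic.norm_eq_zpow_neg_valuation ht]
        gcongr
    _ = 1 := by rw [← zpow_add₀ hp, neg_add_cancel, zpow_zero]

lemma Complex.tendsto_one_add_inv_mul_pow_exp {ι : Type*} {l : Filter ι} {k : ι → ℕ}
    {z : ι → ℂ} {w : ℂ} (hk : Tendsto k l atTop) (hz : Tendsto z l (𝓝 w)) :
    Tendsto (fun i ↦ (1 + (k i : ℂ)⁻¹ * z i) ^ k i) l (𝓝 (Complex.exp w)) := by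
  set u : ι → ℂ := fun i ↦ (k i : ℂ)⁻¹ * z i
  have hk_inv : Tendsto (fun i ↦ (k i : ℂ)⁻¹) l (𝓝 0) := by
    simpa using (tendsto_inv_atTop_zero.comp (tendsto_natCast_atTop_atTop.comp hk)).ofReal
  have hu : Tendsto u l (𝓝 0) := by simpa using hk_inv.mul hz
  have hk_ne : ∀ᶠ i in l, (k i : ℂ) ≠ 0 := by
    filter_upwards [hk.eventually_ne_atTop 0] with i hi
    exact Nat.cast_ne_zero.mpr hi
  -- `log (1 + u) = u + O(u ^ 2)` and `k * u ^ 2 = z * u → 0`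
  have hlog : Tendsto (fun i ↦ k i * Complex.log (1 + u i)) l (𝓝 w) := by
    refine hz.congr_dist (Asymptotics.IsBigO.trans_tendsto ?_ (by simpa using hz.mul hu))
    have hO := ((Asymptotics.isBigO_refl (fun i ↦ (k i : ℂ)) l).mul
      (Complex.log_sub_self_isBigO.comp_tendsto hu))
    refine (Asymptotics.isBigO_norm_left.mpr hO).congr' ?_ ?_
    · filter_upwards [hk_ne] with i hi
      rw [Function.comp_apply, dist_eq_norm, norm_sub_rev, mul_sub, ← mul_assoc,
        mul_inv_cancel₀ hi, one_mul]
    · filter_upwards [hk_ne] with i hi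
      simp only [Function.comp_def, u]
      field_simp
  refine ((Complex.continuous_exp.tendsto w).comp hlog).congr' ?_
  filter_upwards [hu.eventually_ne (show (0 : ℂ) ≠ -1 by norm_num)] with i hi
  have h1u : 1 + u i ≠ 0 := fun h ↦ hi (eq_neg_of_add_eq_zero_right h)
  simp only [Function.comp_apply]
  rw [Complex.exp_nat_mul, Complex.exp_log h1u]

lemma tendsto_integral_of_forall_tendsto_setIntegral {Ω ι 𝕜 : Type*} [MeasurableSpace Ω]
    [TopologicalSpace Ω] [OpensMeasurableSpace Ω] [RCLike 𝕜] {l : Filter ι}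
    {μs : ι → Measure Ω} {μ : Measure Ω} {S : Set Ω} [∀ i, IsFiniteMeasure (μs i)]
    [IsFiniteMeasure (μ.restrict S)]
    (h : ∀ g : BoundedContinuousFunction Ω ℝ,
      Tendsto (fun i ↦ ∫ x in S, g x ∂μs i) l (𝓝 (∫ x in S, g x ∂μ)))
    (f : BoundedContinuousFunction Ω 𝕜) (hf : ∀ x ∉ S, f x = 0) :
    Tendsto (fun i ↦ ∫ x, f x ∂μs i) l (𝓝 (∫ x, f x ∂μ)) := by
  let νs : ι → FiniteMeasure Ω := fun i ↦ ⟨(μs i).restrict S, inferInstance⟩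
  let ν : FiniteMeasure Ω := ⟨μ.restrict S, inferInstance⟩
  have hν : Tendsto νs l (𝓝 ν) := FiniteMeasure.tendsto_iff_forall_integral_tendsto.mpr h
  have hS (ν : Measure Ω) : ∫ x in S, f x ∂ν = ∫ x, f x ∂ν :=
    setIntegral_eq_integral_of_forall_compl_eq_zero hf
  rw [← hS]
  exact ((FiniteMeasure.tendsto_iff_forall_integral_rclike_tendsto 𝕜).mp hν f).congr fun i ↦ hS _

def padicCharMulSubOne (t : ℚ_[p]) : BoundedContinuousFunction ℚ_[p] ℂ :=
  .ofNormedAddCommGroup (fun y ↦ padicChar (t * y) - 1)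
    ((continuous_padicChar.comp (continuous_const.mul continuous_id)).sub continuous_const) 2
    fun y ↦ (norm_sub_le _ _).trans (by rw [norm_padicChar, norm_one]; norm_num)

theorem stmt_14_general {p : ℕ} [Fact p.Prime] (Φ : Measure ℚ_[p])
    (hΦfin : ∀ U ∈ 𝓝 (0 : ℚ_[p]), Φ Uᶜ < ⊤)
    (F : Measure ℚ_[p]) [IsProbabilityMeasure F]
    (k : ℕ → ℕ) (hk : StrictMono k)
    (B : ℕ → ℚ_[p])
    (Φn : ℕ → Measure ℚ_[p])
    (hΦn : ∀ n, Φn n = (k n : ℝ≥0∞) • Measure.map (fun x => (B n)⁻¹ * x) F)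
    (hweak : ∀ i : ℤ, ∀ h : BoundedContinuousFunction ℚ_[p] ℝ,
      Tendsto (fun n => ∫ x in {x : ℚ_[p] | (p : ℝ) ^ i < ‖x‖}, h x ∂(Φn n)) atTop
        (𝓝 (∫ x in {x : ℚ_[p] | (p : ℝ) ^ i < ‖x‖}, h x ∂Φ))) :
    (∀ t : ℚ_[p],
      Tendsto (fun n => ∫ y, (padicChar (t * y) - 1) ∂(Φn n)) atTop
        (𝓝 (∫ y, (padicChar (t * y) - 1) ∂Φ))) ∧
    (∀ t : ℚ_[p],
      Tendsto (fun n =>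
          (1 + (k n : ℂ)⁻¹ * ∫ y, (padicChar (t * y) - 1) ∂(Φn n)) ^ (k n)) atTop
        (𝓝 (Complex.exp (∫ y, (padicChar (t * y) - 1) ∂Φ)))) := by
  have hΦn_finite (n : ℕ) : IsFiniteMeasure (Φn n) :=
    hΦn n ▸ Measure.smul_finite _ (ENNReal.natCast_ne_top _)
  have hconv (t : ℚ_[p]) : Tendsto (fun n => ∫ y, (padicChar (t * y) - 1) ∂(Φn n)) atTop
      (𝓝 (∫ y, (padicChar (t * y) - 1) ∂Φ)) := by
    have hp : (0 : ℝ) < p := Nat.cast_pos.mpr (Fact.out : p.Prime).pos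
    have hS : (closedBall (0 : ℚ_[p]) ((p : ℝ) ^ t.valuation))ᶜ
        = {x : ℚ_[p] | (p : ℝ) ^ t.valuation < ‖x‖} := by
      ext x
      simp
    have : IsFiniteMeasure (Φ.restrict {x : ℚ_[p] | (p : ℝ) ^ t.valuation < ‖x‖}) :=
      isFiniteMeasure_restrict.mpr (hS ▸ (hΦfin _ (closedBall_mem_nhds 0 (zpow_pos hp _))).ne)
    refine tendsto_integral_of_forall_tendsto_setIntegral (hweak t.valuation)
      (padicCharMulSubOne t) fun y hy ↦ ?_
    simp only [padicCharMulSubOne, BoundedContinuousFunction.coe_ofNormedAddCommGroup,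
      padicChar_mul_eq_one_of_norm_le (not_lt.mp hy), sub_self]
  exact ⟨hconv, fun t ↦ Complex.tendsto_one_add_inv_mul_pow_exp hk.tendsto_atTop (hconv t)⟩

/-- Theorem 2 (sufficiency): if the measures `Φₙ(dy) = k(n) F(d(Bₙ y))` converge weakly to
`Φ` on each set `{|x| > p^i}`, then `∫ (χ(ty)-1) dΦₙ → ∫ (χ(ty)-1) dΦ` for every `t`, and
the characteristic functions `fₙ(t) = (1 + k(n)⁻¹ ∫ (χ(ty)-1) dΦₙ)^{k(n)}` of the
normalized sums converge pointwise to `exp ∫ (χ(ty)-1) dΦ`. -/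
theorem stmt_14 {p : ℕ} [Fact p.Prime] (Φ : Measure ℚ_[p]) (hΦ0 : Φ {0} = 0)
    (hΦfin : ∀ U ∈ 𝓝 (0 : ℚ_[p]), Φ Uᶜ < ⊤)
    (F : Measure ℚ_[p]) [IsProbabilityMeasure F]
    (k : ℕ → ℕ) (hk : StrictMono k)
    (B : ℕ → ℚ_[p]) (hB : Tendsto (fun n => ‖B n‖) atTop atTop)
    (Φn : ℕ → Measure ℚ_[p])
    (hΦn : ∀ n, Φn n = (k n : ℝ≥0∞) • Measure.map (fun x => (B n)⁻¹ * x) F)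
    (hweak : ∀ i : ℤ, ∀ h : BoundedContinuousFunction ℚ_[p] ℝ,
      Tendsto (fun n => ∫ x in {x : ℚ_[p] | (p : ℝ) ^ i < ‖x‖}, h x ∂(Φn n)) atTop
        (𝓝 (∫ x in {x : ℚ_[p] | (p : ℝ) ^ i < ‖x‖}, h x ∂Φ))) :
    (∀ t : ℚ_[p],
      Tendsto (fun n => ∫ y, (padicChar (t * y) - 1) ∂(Φn n)) atTop
        (𝓝 (∫ y, (padicChar (t * y) - 1) ∂Φ))) ∧
    (∀ t : ℚ_[p],
      Tendsto (fun n =>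
          (1 + (k n : ℂ)⁻¹ * ∫ y, (padicChar (t * y) - 1) ∂(Φn n)) ^ (k n)) atTop
        (𝓝 (Complex.exp (∫ y, (padicChar (t * y) - 1) ∂Φ)))) :=
  stmt_14_general Φ hΦfin F k hk B Φn hΦn hweak

end
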